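/- Let $(\lambda_n)_{n\ge2}$ be positive reals with $\sum_{n\ge2}\lambda_n^{-1}<\infty$ and $\lambda_n/\lambda_{n+1} \to \alpha \in [0,1)$. Let $X_i$ be independent Exp($\lambda_i$), $T_n=\sum_{i=n+1}^\infty X_i$, $A_n=\sum_{i=n+1}^\infty \lambda_i^{-1}$. Then for every $u \ge 0$, $\mathbb{E}[e^{-u T_n / A_n}] \to \prod_{i=0}^\infty \frac{1}{u\,\alpha^i(1-\alpha) + 1}$ as $n \to \infty$. -/

import Mathlib

/-!
The Laplace transform of `T n` factorises over the independent exponential summands: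
`𝔼 exp (-s T_n) = ∏_{i > n} (1 + s / λ_i)⁻¹`, so at `s = u / A_n` the `i`-th factor is
`(1 + u (λ_{n+1+i} A_n)⁻¹)⁻¹`. Write `(λ_{n+1+i} A_n)⁻¹ = (λ_{n+1} / λ_{n+1+i}) (λ_{n+1} A_n)⁻¹`.
The ratio hypothesis gives `λ_{n+1} / λ_{n+1+i} → α ^ i`, eventually bounded by `β ^ i` for any
`β ∈ (α, 1)`, so by dominated convergence `λ_{n+1} A_n = ∑_j λ_{n+1} / λ_{n+1+j} → (1 - α)⁻¹`.
As `λ_{n+1} A_n ≥ 1`, the terms `u (λ_{n+1+i} A_n)⁻¹` are dominated by `u β ^ i`, and dominated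
convergence for infinite products concludes.
-/

open MeasureTheory ProbabilityTheory Filter Topology Real

lemma mgf_id_expMeasure {r t : ℝ} (hr : 0 < r) (ht : t < r) :
    mgf id (expMeasure r) t = r / (r - t) := by
  have hdensity : ∀ x, (exponentialPDF r x).toReal * exp (t * x)
      = Set.indicator (Set.Ici 0) (fun x => r * exp ((t - r) * x)) x := by
    intro x
    rcases le_or_gt 0 x with hx | hx
    · rw [Set.indicator_of_mem (Set.mem_Ici.mpr hx), exponentialPDF_of_nonneg hx,
        ENNReal.toReal_ofReal (by positivity), mul_assoc, ← exp_add]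
      ring_nf
    · simp [exponentialPDF_of_neg hx, Set.indicator_of_notMem (Set.notMem_Ici.mpr hx)]
  calc mgf id (expMeasure r) t
      = ∫ x, exp (t * x) ∂volume.withDensity (exponentialPDF r) := rfl
    _ = r * ∫ x in Set.Ioi 0, exp ((t - r) * x) := by
        rw [integral_withDensity_eq_integral_toReal_smul (f := exponentialPDF r)
            (measurable_exponentialPDFReal r).ennreal_ofReal
            (ae_of_all _ fun _ => ENNReal.ofReal_lt_top)]
        simp_rw [smul_eq_mul, hdensity]
        rw [integral_indicator measurableSet_Ici, integral_Ici_eq_integral_Ioi, integral_const_mul]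
    _ = r / (r - t) := by
        rw [integral_exp_mul_Ioi (by linarith), mul_zero, exp_zero, neg_div, ← div_neg, neg_sub,
          mul_one_div]

lemma ae_nonneg_expMeasure (r : ℝ) : ∀ᵐ x ∂expMeasure r, 0 ≤ x := by
  rw [ae_iff]
  simp only [not_le]
  change volume.withDensity (exponentialPDF r) (Set.Iio 0) = 0
  rw [withDensity_apply _ measurableSet_Iio]
  exact lintegral_exponentialPDF_of_nonpos le_rfl

lemma tprod_one_add_pos {ι : Type*} {f : ι → ℝ} (hf0 : ∀ i, 0 ≤ f i) (hf : Summable f) :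
    0 < ∏' i, (1 + f i) := by
  rw [← Real.rexp_tsum_eq_tprod (fun i => by linarith [hf0 i])
    (Real.summable_log_one_add_of_summable hf)]
  exact exp_pos _

lemma hasProd_inv_one_add_of_summable {ι : Type*} {f : ι → ℝ} (hf0 : ∀ i, 0 ≤ f i)
    (hf : Summable f) : HasProd (fun i => (1 + f i)⁻¹) (∏' i, (1 + f i))⁻¹ :=
  (Real.multipliable_one_add_of_summable hf).hasProd.inv₀ (tprod_one_add_pos hf0 hf).ne'

theorem tendsto_tprod_inv_one_add_of_dominated_convergence {α β : Type*} {𝓕 : Filter α}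
    {f : α → β → ℝ} {g : β → ℝ} {bound : β → ℝ} (h_sum : Summable bound)
    (hf0 : ∀ n k, 0 ≤ f n k) (hfg : ∀ k, Tendsto (f · k) 𝓕 (𝓝 (g k)))
    (h_bound : ∀ᶠ n in 𝓕, ∀ k, f n k ≤ bound k) :
    Tendsto (fun n => ∏' k, (1 + f n k)⁻¹) 𝓕 (𝓝 (∏' k, (1 + g k)⁻¹)) := by
  rcases eq_or_neBot 𝓕 with rfl | _
  · exact tendsto_bot
  have hg0 (k : β) : 0 ≤ g k := ge_of_tendsto' (hfg k) fun n => hf0 n k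
  have hg_sum : Summable g := h_sum.of_nonneg_of_le hg0 fun k =>
    le_of_tendsto (hfg k) (h_bound.mono fun n hn => hn k)
  rw [(hasProd_inv_one_add_of_summable hg0 hg_sum).tprod_eq]
  have hnorm : ∀ᶠ n in 𝓕, ∀ k, ‖f n k‖ ≤ bound k :=
    h_bound.mono fun n hn k => by rw [Real.norm_of_nonneg (hf0 n k)]; exact hn k
  refine ((tendsto_tprod_one_add_of_dominated_convergence h_sum hfg hnorm).inv₀ ?_).congr' ?_
  · exact (tprod_one_add_pos hg0 hg_sum).ne'
  · filter_upwards [h_bound] with n hn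
    exact ((hasProd_inv_one_add_of_summable (hf0 n)
      (h_sum.of_nonneg_of_le (hf0 n) hn)).tprod_eq).symm

section RatioLimit

variable {lam : ℕ → ℝ} {α : ℝ}

lemma tendsto_div_add_of_tendsto_div_succ (hne : ∀ n, lam n ≠ 0)
    (hratio : Tendsto (fun n => lam n / lam (n + 1)) atTop (𝓝 α)) (j : ℕ) :
    Tendsto (fun n => lam n / lam (n + j)) atTop (𝓝 (α ^ j)) := by
  induction j with
  | zero => simp [div_self (hne _)]
  | succ j ih =>
    have hstep := ih.mul (hratio.comp (tendsto_add_atTop_nat j))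
    refine (pow_succ α j ▸ hstep).congr fun n => ?_
    simp only [Function.comp_apply, ← add_assoc, div_mul_div_cancel₀ (hne (n + j))]

lemma eventually_div_add_le_pow (hpos : ∀ n, 0 < lam n)
    (hratio : Tendsto (fun n => lam n / lam (n + 1)) atTop (𝓝 α)) {β : ℝ} (hβ : α < β) :
    ∀ᶠ n in atTop, ∀ j, lam n / lam (n + j) ≤ β ^ j := by
  obtain ⟨N, hN⟩ := eventually_atTop.1 (hratio.eventually (eventually_le_nhds hβ))
  filter_upwards [eventually_ge_atTop N] with n hn j
  induction j with
  | zero => simp [div_self (hpos n).ne']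
  | succ j ih =>
    rw [← div_mul_div_cancel₀ (hpos (n + j)).ne', pow_succ, ← add_assoc]
    exact mul_le_mul ih (hN (n + j) (by omega)) (div_pos (hpos _) (hpos _)).le
      ((div_pos (hpos _) (hpos _)).le.trans ih)

lemma tendsto_mul_tsum_inv (hpos : ∀ n, 0 < lam n) (hα : α < 1)
    (hratio : Tendsto (fun n => lam n / lam (n + 1)) atTop (𝓝 α)) :
    Tendsto (fun n => lam n * ∑' j, (lam (n + j))⁻¹) atTop (𝓝 (1 - α)⁻¹) := by
  have hα0 : 0 ≤ α := ge_of_tendsto' hratio fun n => (div_pos (hpos n) (hpos _)).le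
  have hβ : α < (α + 1) / 2 := by linarith
  have hlim := tendsto_tsum_of_dominated_convergence
    (summable_geometric_of_lt_one (by linarith) (by linarith : (α + 1) / 2 < 1))
    (tendsto_div_add_of_tendsto_div_succ (fun n => (hpos n).ne') hratio)
    ((eventually_div_add_le_pow hpos hratio hβ).mono fun n hn j => by
      rw [Real.norm_of_nonneg (div_pos (hpos _) (hpos _)).le]; exact hn j)
  rw [tsum_geometric_of_lt_one hα0 hα] at hlim
  simpa only [← tsum_mul_left, div_eq_mul_inv] using hlim

lemma inv_mul_eq_div_mul_inv_mul {a b : ℝ} (hb : b ≠ 0) (S : ℝ) :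
    (a * S)⁻¹ = b / a * (b * S)⁻¹ := by
  rw [mul_inv, mul_inv, div_eq_mul_inv, mul_mul_mul_comm, mul_inv_cancel₀ hb, one_mul]

lemma tendsto_inv_mul_tsum_inv (hpos : ∀ n, 0 < lam n) (hα : α < 1)
    (hratio : Tendsto (fun n => lam n / lam (n + 1)) atTop (𝓝 α)) (i : ℕ) :
    Tendsto (fun n => (lam (n + i) * ∑' j, (lam (n + j))⁻¹)⁻¹) atTop (𝓝 (α ^ i * (1 - α))) := by
  have h := (tendsto_div_add_of_tendsto_div_succ (fun n => (hpos n).ne') hratio i).mul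
    ((tendsto_mul_tsum_inv hpos hα hratio).inv₀ (inv_ne_zero (by linarith)))
  rw [inv_inv] at h
  exact h.congr fun n => (inv_mul_eq_div_mul_inv_mul (hpos n).ne' _).symm

lemma inv_mul_tsum_inv_le_div (hpos : ∀ n, 0 < lam n) (hsum : Summable fun n => (lam n)⁻¹)
    (n i : ℕ) : (lam (n + i) * ∑' j, (lam (n + j))⁻¹)⁻¹ ≤ lam n / lam (n + i) := by
  have hS : (lam n)⁻¹ ≤ ∑' j, (lam (n + j))⁻¹ :=
    (hsum.comp_injective (add_right_injective n)).le_tsum 0 fun j _ => (inv_pos.2 (hpos _)).le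
  have hone : 1 ≤ lam n * ∑' j, (lam (n + j))⁻¹ := by
    simpa [(hpos n).ne'] using mul_le_mul_of_nonneg_left hS (hpos n).le
  rw [inv_mul_eq_div_mul_inv_mul (hpos n).ne']
  exact mul_le_of_le_one_right (div_pos (hpos _) (hpos _)).le (inv_le_one_of_one_le₀ hone)

end RatioLimit

section LaplaceTransform

variable {Ω : Type*} [MeasurableSpace Ω] {P : Measure Ω} {X : ℕ → Ω → ℝ} {lam : ℕ → ℝ}

lemma mgf_neg_of_map_eq_expMeasure {Y : Ω → ℝ} {r s : ℝ} (hY : AEMeasurable Y P) (hr : 0 < r)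
    (hexp : P.map Y = expMeasure r) (hs : 0 ≤ s) : mgf Y P (-s) = (1 + s / r)⁻¹ := by
  rw [← mgf_id_map hY, hexp, mgf_id_expMeasure hr (by linarith), one_add_div hr.ne', inv_div,
    sub_neg_eq_add, add_comm]

theorem integral_exp_neg_mul_of_hasSum_expMeasure (hindep : iIndepFun X P)
    (hmeas : ∀ i, AEMeasurable (X i) P) (hlam : ∀ i, 0 < lam i)
    (hexp : ∀ i, P.map (X i) = expMeasure (lam i)) (hsum : Summable fun i => (lam i)⁻¹)
    {S : Ω → ℝ} (hS : ∀ᵐ ω ∂P, HasSum (fun i => X i ω) (S ω)) {s : ℝ} (hs : 0 ≤ s) :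
    ∫ ω, exp (-(s * S ω)) ∂P = ∏' i, (1 + s / lam i)⁻¹ := by
  have := hindep.isProbabilityMeasure
  have hpartial (N : ℕ) :
      ∫ ω, exp (-(s * ∑ i ∈ Finset.range N, X i ω)) ∂P
        = ∏ i ∈ Finset.range N, (1 + s / lam i)⁻¹ := by
    rw [← Finset.prod_congr rfl fun i _ =>
      mgf_neg_of_map_eq_expMeasure (hmeas i) (hlam i) (hexp i) hs, ← hindep.mgf_sum₀ hmeas]
    simp only [mgf, Finset.sum_apply, neg_mul]
  have hX_nonneg : ∀ᵐ ω ∂P, ∀ i, 0 ≤ X i ω :=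
    ae_all_iff.2 fun i => ae_of_ae_map (hmeas i) (hexp i ▸ ae_nonneg_expMeasure (lam i))
  have hpartial_tendsto : Tendsto (fun N => ∫ ω, exp (-(s * ∑ i ∈ Finset.range N, X i ω)) ∂P)
      atTop (𝓝 (∫ ω, exp (-(s * S ω)) ∂P)) := by
    refine tendsto_integral_of_dominated_convergence (fun _ => 1) (fun N => ?_) (integrable_const 1)
      (fun N => ?_) ?_
    · exact (by fun_prop : AEMeasurable _ P).aestronglyMeasurable
    · filter_upwards [hX_nonneg] with ω hω
      rw [Real.norm_of_nonneg (exp_pos _).le, exp_le_one_iff, neg_nonpos]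
      exact mul_nonneg hs (Finset.sum_nonneg fun i _ => hω i)
    · filter_upwards [hS] with ω hω
      exact ((hω.tendsto_sum_nat.const_mul s).neg).rexp
  have hmult : Multipliable fun i => (1 + s / lam i)⁻¹ :=
    (hasProd_inv_one_add_of_summable (fun i => div_nonneg hs (hlam i).le)
      (by simpa only [div_eq_mul_inv] using hsum.mul_left s)).multipliable
  exact tendsto_nhds_unique (hpartial_tendsto.congr hpartial) hmult.tendsto_prod_tprod_nat

end LaplaceTransform

theorem hitting_time_laplace_limit_general {Ω : Type*} [MeasurableSpace Ω]
    (P : Measure Ω)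
    (lam : ℕ → ℝ) (hpos : ∀ n, 0 < lam n)
    (hsum : Summable fun n => (lam n)⁻¹)
    (α : ℝ) (hα : α ∈ Set.Ico (0 : ℝ) 1)
    (hratio : Tendsto (fun n => lam n / lam (n + 1)) atTop (𝓝 α))
    (X : ℕ → Ω → ℝ) (hmeas : ∀ i, Measurable (X i))
    (hindep : iIndepFun X P)
    (hexp : ∀ i, Measure.map (X i) P = expMeasure (lam i))
    (T : ℕ → Ω → ℝ)
    (hT : ∀ᵐ ω ∂P, ∀ n, HasSum (fun i => X (n + 1 + i) ω) (T n ω))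
    (A : ℕ → ℝ) (hA : ∀ n, A n = ∑' i : ℕ, (lam (n + 1 + i))⁻¹) :
    ∀ u : ℝ, 0 ≤ u →
      Tendsto (fun n => ∫ ω, Real.exp (-(u * T n ω) / A n) ∂P) atTop
        (𝓝 (∏' i : ℕ, (u * α ^ i * (1 - α) + 1)⁻¹)) := by
  intro u hu
  have htail_sum (n : ℕ) : Summable fun i => (lam (n + 1 + i))⁻¹ :=
    hsum.comp_injective (add_right_injective (n + 1))
  have hA_pos (n : ℕ) : 0 < A n :=
    hA n ▸ (htail_sum n).tsum_pos (fun _ => (inv_pos.2 (hpos _)).le) 0 (inv_pos.2 (hpos _))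
  have hlaw (n : ℕ) : ∫ ω, exp (-(u * T n ω) / A n) ∂P
      = ∏' i, (1 + u * (lam (n + 1 + i) * A n)⁻¹)⁻¹ := by
    have h := integral_exp_neg_mul_of_hasSum_expMeasure
      (hindep.precomp (add_right_injective (n + 1))) (fun i => (hmeas _).aemeasurable)
      (fun i => hpos _) (fun i => hexp _) (htail_sum n) (hT.mono fun ω hω => hω n)
      (div_nonneg hu (hA_pos n).le)
    convert h using 4 <;> ring
  have hlim (i : ℕ) :
      Tendsto (fun n => u * (lam (n + 1 + i) * A n)⁻¹) atTop (𝓝 (u * (α ^ i * (1 - α)))) := by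
    simp only [hA]
    exact ((tendsto_inv_mul_tsum_inv hpos hα.2 hratio i).comp
      (tendsto_add_atTop_nat 1)).const_mul u
  have hbound : ∀ᶠ n in atTop, ∀ i, u * (lam (n + 1 + i) * A n)⁻¹ ≤ u * ((α + 1) / 2) ^ i := by
    filter_upwards [(tendsto_add_atTop_nat 1).eventually
      (eventually_div_add_le_pow hpos hratio (by linarith [hα.2] : α < (α + 1) / 2))] with n hn i
    rw [hA]
    exact mul_le_mul_of_nonneg_left ((inv_mul_tsum_inv_le_div hpos hsum (n + 1) i).trans (hn i)) hu
  have hlimit := tendsto_tprod_inv_one_add_of_dominated_convergence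
    ((summable_geometric_of_lt_one (by linarith [hα.1]) (by linarith [hα.2])).mul_left u)
    (fun n i => mul_nonneg hu (inv_pos.2 (mul_pos (hpos _) (hA_pos n))).le) hlim hbound
  simp only [hlaw]
  convert hlimit using 3
  ext i
  ring

theorem hitting_time_laplace_limit {Ω : Type*} [MeasurableSpace Ω]
    (P : Measure Ω) [IsProbabilityMeasure P]
    (lam : ℕ → ℝ) (hpos : ∀ n, 0 < lam n)
    (hsum : Summable fun n => (lam n)⁻¹)
    (α : ℝ) (hα : α ∈ Set.Ico (0 : ℝ) 1)
    (hratio : Tendsto (fun n => lam n / lam (n + 1)) atTop (𝓝 α))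
    (X : ℕ → Ω → ℝ) (hmeas : ∀ i, Measurable (X i))
    (hindep : iIndepFun X P)
    (hexp : ∀ i, Measure.map (X i) P = expMeasure (lam i))
    (T : ℕ → Ω → ℝ) (hTmeas : ∀ n, Measurable (T n))
    (hT : ∀ᵐ ω ∂P, ∀ n, HasSum (fun i => X (n + 1 + i) ω) (T n ω))
    (A : ℕ → ℝ) (hA : ∀ n, A n = ∑' i : ℕ, (lam (n + 1 + i))⁻¹) :
    ∀ u : ℝ, 0 ≤ u →
      Tendsto (fun n => ∫ ω, Real.exp (-(u * T n ω) / A n) ∂P) atTop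
        (𝓝 (∏' i : ℕ, (u * α ^ i * (1 - α) + 1)⁻¹)) :=
  hitting_time_laplace_limit_general P lam hpos hsum α hα hratio X hmeas hindep hexp T hT A hA
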